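/- Let $x(u) = u^{-2} + \sum_{k \ge 1} c_k u^{k-2}$ be the unique Laurent series solution over $\mathbb{Q}$ of $x(u)^2 x'(u)^2 = 4x(u)^5 - 4$. Substituting the ansatz and equating coefficients yields a recursion determining each $c_k$ uniquely from $c_1, \dots, c_{k-1}$; in particular all $c_k$ are rational and $c_1 = c_2 = \cdots = c_9 = 0$ while $c_{10} \ne 0$. -/

import Mathlib

/-!
Write `F P = P² (X P' - 2 P)² - 4 P⁵`, so that the equation reads `F P = -4 X¹⁰`. If `A` and `B`
have constant term `1` and agree below degree `n`, then the `n`-th coefficients of `F A` and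
`F B` differ by `-4 (n + 1)` times those of `A` and `B`: this is the linearisation of `F` at
`P = 1` acting on `X ^ n`. Since `-4 (n + 1)` never vanishes, the coefficients of a solution are
forced one at a time, and correcting them one at a time converges to a solution. As `F 1 = 0`,
the first correction happens in degree `10`, where it is `-4 / (-44) = 1 / 11`.
-/

open PowerSeries

section Triangular

variable {K : Type*} [Field K]

def CoeffTriangular (F : K⟦X⟧ → K⟦X⟧) (a₀ : K) (l : ℕ → K) : Prop :=
  ∀ A B : K⟦X⟧, constantCoeff A = a₀ → constantCoeff B = a₀ → ∀ n,
    (∀ j < n, coeff j A = coeff j B) →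
      coeff n (F A) - coeff n (F B) = l n * (coeff n A - coeff n B)

namespace CoeffTriangular

variable {F : K⟦X⟧ → K⟦X⟧} {a₀ : K} {l : ℕ → K} {A B : K⟦X⟧}

theorem coeff_eq (hF : CoeffTriangular F a₀ l) (hA : constantCoeff A = a₀)
    (hB : constantCoeff B = a₀) {n : ℕ} (hl : l n ≠ 0)
    (hlt : ∀ j < n, coeff j A = coeff j B) (hn : coeff n (F A) = coeff n (F B)) :
    coeff n A = coeff n B := by
  have := hF A B hA hB n hlt
  rw [hn, sub_self, zero_eq_mul] at this
  exact sub_eq_zero.mp (this.resolve_left hl)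

theorem coeff_eq_of_coeff_map_eq (hF : CoeffTriangular F a₀ l) (hA : constantCoeff A = a₀)
    (hB : constantCoeff B = a₀) (hl : ∀ n, l n ≠ 0) {n : ℕ}
    (h : ∀ j < n, coeff j (F A) = coeff j (F B)) : ∀ j < n, coeff j A = coeff j B := by
  induction n with
  | zero => simp
  | succ n ih =>
    intro j hj
    have hlt := ih fun i hi => h i (by omega)
    rcases Nat.lt_succ_iff_lt_or_eq.mp hj with hj | rfl
    · exact hlt j hj
    · exact hF.coeff_eq hA hB (hl j) hlt (h j (by omega))

theorem eq_of_map_eq (hF : CoeffTriangular F a₀ l) (hA : constantCoeff A = a₀)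
    (hB : constantCoeff B = a₀) (hl : ∀ n, l n ≠ 0) (h : F A = F B) :
    A = B := by
  ext n
  exact hF.coeff_eq_of_coeff_map_eq hA hB hl (n := n + 1) (fun j _ => by rw [h]) n
    n.lt_succ_self

end CoeffTriangular

variable (F : K⟦X⟧ → K⟦X⟧) (a₀ : K) (l : ℕ → K) (G : K⟦X⟧)

noncomputable def triangularApprox : ℕ → K⟦X⟧
  | 0 => C a₀
  | n + 1 => triangularApprox n +
      C ((coeff (n + 1) G - coeff (n + 1) (F (triangularApprox n))) / l (n + 1)) * X ^ (n + 1)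

noncomputable def triangularSolution : K⟦X⟧ :=
  mk fun n => coeff n (triangularApprox F a₀ l G n)

variable {F a₀ l G}

theorem coeff_triangularApprox_succ {j n : ℕ} (h : j ≠ n + 1) :
    coeff j (triangularApprox F a₀ l G (n + 1)) = coeff j (triangularApprox F a₀ l G n) := by
  simp [triangularApprox, h]

theorem constantCoeff_triangularApprox (n : ℕ) :
    constantCoeff (triangularApprox F a₀ l G n) = a₀ := by
  induction n with
  | zero => simp [triangularApprox]
  | succ n ih => rwa [← coeff_zero_eq_constantCoeff_apply, coeff_triangularApprox_succ (by omega),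
      coeff_zero_eq_constantCoeff_apply]

theorem coeff_triangularSolution {j n : ℕ} (h : j ≤ n) :
    coeff j (triangularSolution F a₀ l G) = coeff j (triangularApprox F a₀ l G n) := by
  induction n, h using Nat.le_induction with
  | base => exact coeff_mk _ _
  | succ n hjn ih => rw [ih, coeff_triangularApprox_succ (by omega)]

theorem constantCoeff_triangularSolution :
    constantCoeff (triangularSolution F a₀ l G) = a₀ := by
  rw [← coeff_zero_eq_constantCoeff_apply, coeff_triangularSolution le_rfl,
    coeff_zero_eq_constantCoeff_apply, constantCoeff_triangularApprox]

theorem CoeffTriangular.map_triangularSolution (hF : CoeffTriangular F a₀ l)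
    (hl : ∀ n, l n ≠ 0) (hG : coeff 0 G = coeff 0 (F (C a₀))) :
    F (triangularSolution F a₀ l G) = G := by
  ext n
  cases n with
  | zero =>
    have := hF (triangularSolution F a₀ l G) (C a₀) constantCoeff_triangularSolution
      (constantCoeff_C a₀) 0 (by simp)
    rw [coeff_triangularSolution le_rfl, triangularApprox, sub_self, mul_zero, sub_eq_zero] at this
    rw [this, hG]
  | succ n =>
    have := hF (triangularSolution F a₀ l G) _ constantCoeff_triangularSolution
      (constantCoeff_triangularApprox n) (n + 1) fun j hj => coeff_triangularSolution (by omega)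
    rw [coeff_triangularSolution le_rfl] at this
    simp only [triangularApprox, map_add, coeff_C_mul_X_pow, if_true, add_sub_cancel_left] at this
    rw [mul_div_cancel₀ _ (hl _)] at this
    linear_combination this

theorem CoeffTriangular.exists_map_eq (hF : CoeffTriangular F a₀ l)
    (hl : ∀ n, l n ≠ 0) (hG : coeff 0 G = coeff 0 (F (C a₀))) :
    ∃ P, constantCoeff P = a₀ ∧ F P = G :=
  ⟨_, constantCoeff_triangularSolution, hF.map_triangularSolution hl hG⟩

end Triangular

section Curve

variable {R : Type*} [CommRing R]

theorem X_mul_derivative_X_pow_mul (n : ℕ) (S : R⟦X⟧) :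
    X * d⁄dX R (X ^ n * S) = X ^ n * ((n : R⟦X⟧) * S + X * d⁄dX R S) := by
  rcases n with _ | n
  · simp
  · rw [Derivation.leibniz, derivative_pow, derivative_X, smul_eq_mul, smul_eq_mul]
    push_cast
    ring

theorem coeff_ofNat_mul_X_pow (a : ℕ) [a.AtLeastTwo] (j k : ℕ) :
    coeff j ((ofNat(a) : R⟦X⟧) * X ^ k) = if j = k then (ofNat(a) : R) else 0 := by
  rw [← map_ofNat C a, coeff_C_mul_X_pow]

variable (R) in
/-- Substituting `x = P / u²` turns `x² x'² - 4 x⁵` into `curveResidual R P / u¹⁰`. -/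
noncomputable def curveResidual (P : R⟦X⟧) : R⟦X⟧ :=
  P ^ 2 * (X * d⁄dX R P - 2 * P) ^ 2 - 4 * P ^ 5

theorem curveResidual_one : curveResidual R 1 = 0 := by
  simp only [curveResidual, derivative_one]
  ring

theorem coeff_curveResidual_sub {A B : R⟦X⟧} (hA : constantCoeff A = 1)
    (hB : constantCoeff B = 1) {n : ℕ} (h : ∀ j < n, coeff j A = coeff j B) :
    coeff n (curveResidual R A) - coeff n (curveResidual R B) =
      -(4 * (n + 1)) * (coeff n A - coeff n B) := by
  obtain ⟨S, hS⟩ : (X : R⟦X⟧) ^ n ∣ A - B :=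
    X_pow_dvd_iff.mpr fun j hj => by rw [map_sub, h j hj, sub_self]
  have hAB : A = B + X ^ n * S := by rw [← hS]; ring
  set QA := X * d⁄dX R A - 2 * A with hQA
  set QB := X * d⁄dX R B - 2 * B with hQB
  set T := ((n : R⟦X⟧) - 2) * S + X * d⁄dX R S with hT
  have hQ : QA = QB + X ^ n * T := by
    rw [hQA, hQB, hT, hAB, map_add, mul_add, X_mul_derivative_X_pow_mul]
    ring
  -- `G` is `(F A - F B) / X ^ n`, with constant term `(8 - 4 (n - 2) - 20) (a_n - b_n)`
  set G := S * (A + B) * QA ^ 2 + B ^ 2 * T * (QA + QB) -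
    4 * S * (A ^ 4 + A ^ 3 * B + A ^ 2 * B ^ 2 + A * B ^ 3 + B ^ 4) with hG
  have hsub : curveResidual R A - curveResidual R B = X ^ n * G := by
    rw [curveResidual, curveResidual, ← hQA, ← hQB, hG, hQ, hAB]
    ring
  have hS0 : constantCoeff S = coeff n A - coeff n B := by
    rw [← map_sub, hS]
    simpa using (coeff_X_pow_mul S n 0).symm
  have hQA0 : constantCoeff QA = -2 := by simp [hQA, hA, map_ofNat constantCoeff]
  have hQB0 : constantCoeff QB = -2 := by simp [hQB, hB, map_ofNat constantCoeff]
  have hT0 : constantCoeff T = (n - 2) * constantCoeff S := by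
    simp [hT, map_ofNat constantCoeff]
  have hcoeff : coeff n (X ^ n * G) = constantCoeff G := by
    simpa using coeff_X_pow_mul G n 0
  rw [← map_sub, hsub, hcoeff, ← hS0, hG]
  simp only [map_add, map_sub, map_mul, map_pow, hQA0, hQB0, hT0, hA, hB,
    map_ofNat constantCoeff]
  ring

theorem curveResidual_eq_iff {P : R⟦X⟧} :
    curveResidual R P = -4 * X ^ 10 ↔
      P ^ 2 * (X * d⁄dX R P - 2 * P) ^ 2 = 4 * P ^ 5 - 4 * X ^ 10 := by
  rw [curveResidual]
  constructor <;> intro h <;> linear_combination h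

end Curve

theorem coeffTriangular_curveResidual {K : Type*} [Field K] :
    CoeffTriangular (curveResidual K) 1 fun n => -(4 * (n + 1)) :=
  fun _ _ hA hB _ h => coeff_curveResidual_sub hA hB h

section Solution

variable {K : Type*} [Field K] [CharZero K]

theorem neg_four_mul_succ_ne_zero (n : ℕ) : -(4 * ((n : K) + 1)) ≠ 0 :=
  neg_ne_zero.mpr (mul_ne_zero (by norm_num) n.cast_add_one_ne_zero)

theorem coeff_eq_coeff_one_of_curveResidual_eq {P : K⟦X⟧} (hP0 : constantCoeff P = 1)
    (hP : curveResidual K P = -4 * X ^ 10) : ∀ k < 10, coeff k P = coeff k 1 :=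
  coeffTriangular_curveResidual.coeff_eq_of_coeff_map_eq hP0 constantCoeff_one
    neg_four_mul_succ_ne_zero fun j hj => by
      rw [hP, curveResidual_one, neg_mul, map_neg, coeff_ofNat_mul_X_pow, if_neg hj.ne,
        map_zero, neg_zero]

theorem coeff_ten_of_curveResidual_eq {P : K⟦X⟧} (hP0 : constantCoeff P = 1)
    (hP : curveResidual K P = -4 * X ^ 10) : coeff 10 P = 1 / 11 := by
  have := coeffTriangular_curveResidual P 1 hP0 constantCoeff_one 10
    (coeff_eq_coeff_one_of_curveResidual_eq hP0 hP)
  rw [hP, curveResidual_one, neg_mul, map_neg, coeff_ofNat_mul_X_pow, if_pos rfl, map_zero,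
    sub_zero, coeff_one, if_neg (by norm_num), sub_zero] at this
  push_cast at this
  linear_combination this / 44

theorem coeff_eq_zero_of_curveResidual_eq {P : K⟦X⟧} (hP0 : constantCoeff P = 1)
    (hP : curveResidual K P = -4 * X ^ 10) {k : ℕ} (hk0 : k ≠ 0) (hk : k < 10) :
    coeff k P = 0 := by
  rw [coeff_eq_coeff_one_of_curveResidual_eq hP0 hP k hk, coeff_one, if_neg hk0]

end Solution

/-- The solution of `x² x'² = 4x⁵ - 4` with `x = u⁻² + ∑_{k≥1} c_k u^(k-2)`
(written `x = P/u²`, `c_k` = coefficient of `u^k` in `P`): the coefficient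
equations determine each `c_k` uniquely from `c_1, …, c_{k-1}`, the solution
exists and is unique, and `c_1 = ⋯ = c_9 = 0` while `c_{10} ≠ 0`. -/
theorem recursion_determines_coefficients :
    (∃! P : ℚ⟦X⟧,
      constantCoeff P = 1 ∧ coeff 1 P = 0 ∧ coeff 2 P = 0 ∧
      P ^ 2 * (X * d⁄dX ℚ P - 2 * P) ^ 2 = 4 * P ^ 5 - 4 * X ^ 10) ∧
    (∀ P₁ P₂ : ℚ⟦X⟧,
      (constantCoeff P₁ = 1 ∧ coeff 1 P₁ = 0 ∧ coeff 2 P₁ = 0 ∧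
        P₁ ^ 2 * (X * d⁄dX ℚ P₁ - 2 * P₁) ^ 2 = 4 * P₁ ^ 5 - 4 * X ^ 10) →
      (constantCoeff P₂ = 1 ∧ coeff 1 P₂ = 0 ∧ coeff 2 P₂ = 0 ∧
        P₂ ^ 2 * (X * d⁄dX ℚ P₂ - 2 * P₂) ^ 2 = 4 * P₂ ^ 5 - 4 * X ^ 10) →
      ∀ k : ℕ, (∀ j, j < k → coeff j P₁ = coeff j P₂) →
        coeff k P₁ = coeff k P₂) ∧
    (∀ P : ℚ⟦X⟧,
      (constantCoeff P = 1 ∧ coeff 1 P = 0 ∧ coeff 2 P = 0 ∧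
        P ^ 2 * (X * d⁄dX ℚ P - 2 * P) ^ 2 = 4 * P ^ 5 - 4 * X ^ 10) →
      (∀ k, 1 ≤ k → k ≤ 9 → coeff k P = 0) ∧ coeff 10 P ≠ 0) := by
  have hF := coeffTriangular_curveResidual (K := ℚ)
  have hl := neg_four_mul_succ_ne_zero (K := ℚ)
  have hsol : ∀ P : ℚ⟦X⟧, (constantCoeff P = 1 ∧ coeff 1 P = 0 ∧ coeff 2 P = 0 ∧
      P ^ 2 * (X * d⁄dX ℚ P - 2 * P) ^ 2 = 4 * P ^ 5 - 4 * X ^ 10) ↔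
      constantCoeff P = 1 ∧ curveResidual ℚ P = -4 * X ^ 10 := by
    refine fun P => ⟨fun h => ⟨h.1, curveResidual_eq_iff.mpr h.2.2.2⟩, fun ⟨hP0, hP⟩ => ?_⟩
    exact ⟨hP0, coeff_eq_zero_of_curveResidual_eq hP0 hP one_ne_zero (by norm_num),
      coeff_eq_zero_of_curveResidual_eq hP0 hP two_ne_zero (by norm_num),
      curveResidual_eq_iff.mp hP⟩
  obtain ⟨P, hP0, hP⟩ := hF.exists_map_eq hl (G := -4 * X ^ 10) (by simp [curveResidual_one])
  refine ⟨⟨P, (hsol P).2 ⟨hP0, hP⟩, fun Q hQ => ?_⟩, fun P₁ P₂ h₁ h₂ k hk => ?_, fun Q hQ => ?_⟩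
  · obtain ⟨hQ0, hQ⟩ := (hsol Q).1 hQ
    exact hF.eq_of_map_eq hQ0 hP0 hl (hQ.trans hP.symm)
  · rw [hsol] at h₁ h₂
    exact hF.coeff_eq h₁.1 h₂.1 (hl k) hk (by rw [h₁.2, h₂.2])
  · rw [hsol] at hQ
    refine ⟨fun k hk1 hk9 => coeff_eq_zero_of_curveResidual_eq hQ.1 hQ.2 (by omega) (by omega), ?_⟩
    rw [coeff_ten_of_curveResidual_eq hQ.1 hQ.2]
    norm_num
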